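/- For any real-valued random variable X taking values in [a, b] with mean μ = E[X], the variance satisfies Var(X) ≤ (b − μ)(μ − a). -/

import Mathlib

open MeasureTheory ProbabilityTheory

/-- Bhatia–Davis inequality: for a real random variable `X` on a probability space taking
values in `[a, b]` a.s., with mean `μ = E[X]`, one has `Var(X) ≤ (b − μ)(μ − a)`. -/
theorem bhatia_davis {Ω : Type*} [MeasureSpace Ω] [IsProbabilityMeasure (ℙ : Measure Ω)]
    (X : Ω → ℝ) (a b : ℝ) (hX : Integrable X ℙ)
    (hab : ∀ᵐ ω ∂(ℙ : Measure Ω), X ω ∈ Set.Icc a b) :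
    variance X ℙ ≤ (b - ∫ ω, X ω) * ((∫ ω, X ω) - a) := by
  have hbound : ∀ᵐ ω ∂(ℙ : Measure Ω), ‖X ω‖ ≤ max |a| |b| := by
    filter_upwards [hab] with ω hω
    rw [Real.norm_eq_abs, abs_le]
    refine ⟨?_, ?_⟩
    · linarith [neg_abs_le a, le_max_left |a| |b|, hω.1]
    · linarith [le_abs_self b, le_max_right |a| |b|, hω.2]
  have hmem2 : MemLp X 2 ℙ :=
    (memLp_top_of_bound hX.aestronglyMeasurable _ hbound).mono_exponent le_top
  have hsq : Integrable (fun ω => X ω ^ 2) ℙ := hmem2.integrable_sq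
  have hneg : Integrable (fun ω => -(X ω ^ 2)) ℙ := hsq.neg
  have hlin : Integrable (fun ω => (a + b) * X ω) ℙ := hX.const_mul _
  have hsum : Integrable (fun ω => -(X ω ^ 2) + (a + b) * X ω) ℙ := hneg.add hlin
  set μ := ∫ ω, X ω with hμ
  have hvar : variance X ℙ = (∫ ω, X ω ^ 2) - μ ^ 2 := variance_eq_sub hmem2
  have hint : Integrable (fun ω => (b - X ω) * (X ω - a)) ℙ := by
    have : (fun ω => (b - X ω) * (X ω - a)) =
        fun ω => -(X ω ^ 2) + (a + b) * X ω - a * b := by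
      funext ω; ring
    rw [this]
    exact hsum.sub (integrable_const _)
  have hnonneg : 0 ≤ ∫ ω, (b - X ω) * (X ω - a) := by
    apply integral_nonneg_of_ae
    filter_upwards [hab] with ω hω
    exact mul_nonneg (by linarith [hω.2]) (by linarith [hω.1])
  have hexp : ∫ ω, (b - X ω) * (X ω - a)
      = -(∫ ω, X ω ^ 2) + (a + b) * μ - a * b := by
    have h1 : (fun ω => (b - X ω) * (X ω - a)) =
        fun ω => -(X ω ^ 2) + (a + b) * X ω - a * b := by
      funext ω; ring
    rw [h1, integral_sub hsum (integrable_const _), integral_add hneg hlin,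
      integral_neg, integral_const_mul, integral_const]
    simp [hμ]
  rw [hvar]
  rw [hexp] at hnonneg
  nlinarith [hnonneg]
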